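/- Let f : [0,T] → ℝ be continuously differentiable and attain its minimum over [0,T] at a point t₀ ∈ (0,T]. Then for every α ∈ (0,1), the Caputo fractional derivative ∂ₜ^α f(t₀) = (1/Γ(1−α)) ∫₀^{t₀} f′(τ) (t₀−τ)^{−α} dτ satisfies ∂ₜ^α f(t₀) ≤ 0. -/

import Mathlib

/-!
As `Γ(1 - α) > 0`, only the sign of the integral matters. For `s < t₀`, integrating by parts on
`[0, s]` the nonnegative function `f - f t₀` against the increasing kernel `(t₀ - τ)^{-α}` bounds
the truncated integral by the boundary term `(f s - f t₀) (t₀ - s)^{-α}`. Differentiability of `f`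
at `t₀` makes that term `O((t₀ - s)^{1-α})`, so it tends to `0` as `s → t₀⁻`, while the truncated
integrals tend to the full one because the integrand is integrable.
-/

open Set Filter Topology MeasureTheory

theorem intervalIntegrable_sub_rpow {b r : ℝ} (hr : -1 < r) (x y : ℝ) :
    IntervalIntegrable (fun τ => (b - τ) ^ r) volume x y := by
  simpa using
    (intervalIntegral.intervalIntegrable_rpow' (a := b - x) (b := b - y) hr).comp_sub_left b

theorem hasDerivAt_sub_rpow_neg {b α x : ℝ} (hx : x < b) :
    HasDerivAt (fun τ => (b - τ) ^ (-α)) (α * (b - x) ^ (-α - 1)) x := by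
  convert ((hasDerivAt_id' x).const_sub b).rpow_const (p := -α) (Or.inl (sub_pos.2 hx).ne') using 1
  ring

theorem integral_deriv_mul_sub_rpow_le {f f' : ℝ → ℝ} {a s b α : ℝ} (has : a ≤ s) (hsb : s < b)
    (hα : 0 ≤ α) (hderiv : ∀ t ∈ Icc a s, HasDerivAt f (f' t) t)
    (hf' : ContinuousOn f' (Icc a s)) (hmin : ∀ t ∈ Icc a s, f b ≤ f t) :
    ∫ τ in a..s, f' τ * (b - τ) ^ (-α) ≤ (f s - f b) * (b - s) ^ (-α) := by
  have hI : uIcc a s = Icc a s := uIcc_of_le has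
  have hlt : ∀ t ∈ uIcc a s, t < b := fun t ht => (hI ▸ ht).2.trans_lt hsb
  have hu : ∀ t ∈ uIcc a s, HasDerivAt (fun τ => f τ - f b) (f' t) t :=
    fun t ht => (hderiv t (hI ▸ ht)).sub_const _
  have hv : ∀ t ∈ uIcc a s, HasDerivAt (fun τ => (b - τ) ^ (-α)) (α * (b - t) ^ (-α - 1)) t :=
    fun t ht => hasDerivAt_sub_rpow_neg (hlt t ht)
  have hv' : ContinuousOn (fun t => α * (b - t) ^ (-α - 1)) (uIcc a s) :=
    continuousOn_const.mul <| (continuousOn_const.sub continuousOn_id).rpow_const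
      fun t ht => Or.inl (sub_pos.2 (hlt t ht)).ne'
  have hu_cont : ContinuousOn (fun τ => f τ - f b) (uIcc a s) :=
    fun t ht => (hu t ht).continuousAt.continuousWithinAt
  have hv_cont : ContinuousOn (fun τ => (b - τ) ^ (-α)) (uIcc a s) :=
    fun t ht => (hv t ht).continuousAt.continuousWithinAt
  rw [← hI] at hf'
  have hibp := intervalIntegral.integral_deriv_mul_eq_sub hu hv hf'.intervalIntegrable
    hv'.intervalIntegrable
  rw [intervalIntegral.integral_add (hf'.mul hv_cont).intervalIntegrable
    (f := fun t => f' t * (b - t) ^ (-α)) (g := fun t => (f t - f b) * (α * (b - t) ^ (-α - 1)))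
    (hu_cont.mul hv').intervalIntegrable] at hibp
  have hrest : 0 ≤ ∫ t in a..s, (f t - f b) * (α * (b - t) ^ (-α - 1)) :=
    intervalIntegral.integral_nonneg has fun t ht => mul_nonneg (sub_nonneg.2 (hmin t ht))
      (mul_nonneg hα (Real.rpow_nonneg (sub_pos.2 (hlt t (hI ▸ ht))).le _))
  have hleft : 0 ≤ (f a - f b) * (b - a) ^ (-α) :=
    mul_nonneg (sub_nonneg.2 (hmin a (left_mem_Icc.2 has)))
      (Real.rpow_nonneg (sub_pos.2 (has.trans_lt hsb)).le _)
  linarith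

theorem tendsto_sub_mul_sub_rpow_neg {f : ℝ → ℝ} {d b α : ℝ} (hf : HasDerivAt f d b)
    (hα : α < 1) : Tendsto (fun s => (f s - f b) * (b - s) ^ (-α)) (𝓝[<] b) (𝓝 0) := by
  have hslope : Tendsto (slope f b) (𝓝[<] b) (𝓝 d) :=
    hf.tendsto_slope.mono_left (nhdsWithin_mono _ fun _ hs => ne_of_lt hs)
  have hpow : Tendsto (fun s => (b - s) ^ (1 - α)) (𝓝[<] b) (𝓝 0) := by
    have : ContinuousAt (fun s => (b - s) ^ (1 - α)) b :=
      (continuousAt_const.sub continuousAt_id).rpow_const (Or.inr (sub_pos.2 hα).le)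
    simpa [Real.zero_rpow (sub_pos.2 hα).ne'] using this.tendsto.mono_left nhdsWithin_le_nhds
  have hprod := hslope.neg.mul hpow
  rw [mul_zero] at hprod
  -- `(f s - f b) (b - s)^{-α} = -(slope f b s) (b - s)^{1-α}` for `s < b`
  refine hprod.congr' (eventually_nhdsWithin_of_forall fun s (hs : s < b) => ?_)
  have hbs : 0 < b - s := sub_pos.2 hs
  rw [slope_def_field, show 1 - α = 1 + -α by ring, Real.rpow_add hbs, Real.rpow_one]
  field_simp [(sub_neg.2 hs).ne]
  ring

theorem stmt_4_general (T : ℝ) (f f' : ℝ → ℝ)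
    (hderiv : ∀ t ∈ Set.Icc 0 T, HasDerivAt f (f' t) t)
    (hf' : ContinuousOn f' (Set.Icc 0 T))
    (t₀ : ℝ) (ht₀ : t₀ ∈ Set.Ioc 0 T)
    (hmin : ∀ t ∈ Set.Icc 0 T, f t₀ ≤ f t) :
    ∀ α ∈ Set.Ioo (0:ℝ) 1,
      (1 / Real.Gamma (1 - α)) * ∫ τ in (0:ℝ)..t₀, f' τ * (t₀ - τ) ^ (-α) ≤ 0 := by
  rintro α ⟨hα0, hα1⟩
  obtain ⟨ht0, htT⟩ := ht₀
  suffices h : ∫ τ in (0:ℝ)..t₀, f' τ * (t₀ - τ) ^ (-α) ≤ 0 from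
    mul_nonpos_of_nonneg_of_nonpos (one_div_nonneg.2 (Real.Gamma_pos_of_pos (by linarith)).le) h
  have hsub : ∀ s ≤ t₀, Icc 0 s ⊆ Icc 0 T := fun s hs => Icc_subset_Icc_right (hs.trans htT)
  have hint : IntervalIntegrable (fun τ => f' τ * (t₀ - τ) ^ (-α)) volume 0 t₀ :=
    (intervalIntegrable_sub_rpow (by linarith) 0 t₀).continuousOn_mul
      (hf'.mono (uIcc_of_le ht0.le ▸ hsub t₀ le_rfl))
  have hprim : Tendsto (fun s => ∫ τ in (0:ℝ)..s, f' τ * (t₀ - τ) ^ (-α)) (𝓝[<] t₀)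
      (𝓝 (∫ τ in (0:ℝ)..t₀, f' τ * (t₀ - τ) ^ (-α))) := by
    rw [← nhdsWithin_Ioo_eq_nhdsLT ht0]
    exact (intervalIntegral.continuousOn_primitive_interval' hint left_mem_uIcc t₀
      right_mem_uIcc).mono (uIcc_of_le ht0.le ▸ Ioo_subset_Icc_self)
  refine le_of_tendsto_of_tendsto hprim
    (tendsto_sub_mul_sub_rpow_neg (hderiv t₀ ⟨ht0.le, htT⟩) hα1) ?_
  filter_upwards [Ioo_mem_nhdsLT ht0] with s hs
  exact integral_deriv_mul_sub_rpow_le hs.1.le hs.2 hα0.le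
    (fun t ht => hderiv t (hsub s hs.2.le ht)) (hf'.mono (hsub s hs.2.le))
    (fun t ht => hmin t (hsub s hs.2.le ht))

theorem stmt_4 (T : ℝ) (hT : 0 < T) (f f' : ℝ → ℝ)
    (hderiv : ∀ t ∈ Set.Icc 0 T, HasDerivAt f (f' t) t)
    (hf' : ContinuousOn f' (Set.Icc 0 T))
    (t₀ : ℝ) (ht₀ : t₀ ∈ Set.Ioc 0 T)
    (hmin : ∀ t ∈ Set.Icc 0 T, f t₀ ≤ f t) :
    ∀ α ∈ Set.Ioo (0:ℝ) 1,
      (1 / Real.Gamma (1 - α)) * ∫ τ in (0:ℝ)..t₀, f' τ * (t₀ - τ) ^ (-α) ≤ 0 :=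
  stmt_4_general T f f' hderiv hf' t₀ ht₀ hmin
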